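/- arXiv:1202.4568 — 5 statements merged into one kernel-verified Lean document; each statement's English description precedes it below -/
import Mathlib

section
/- Let P be the 3×4 integer matrix with rows (−1, −l_{02}, l_{11}, 0), (−1, −l_{02}, 0, l_{21}), (d_{01}, d_{02}, d_{11}, d_{21}), where l_{02} ≥ 1, l_{11} ≥ l_{21} ≥ 2 and d_{01}, d_{02}, d_{11}, d_{21} are integers, the columns of P are pairwise different primitive vectors generating ℚ³ as a convex cone, and det(P_{01}) > 0, where P_{01} is obtained from P by deleting the first column. Here r = 2, s = 1, n_0 = 2, n_1 = n_2 = 1, m = 0, l_0 = (1, l_{02}), l_1 = (l_{11}), l_2 = (l_{21}). Then a tuple (u, 1, 2, (1,1,1)) with u = (u_1,u_2,u_3) ∈ ℤ³ is a horizontal Demazure P-root if and only if, setting α := u_3: l_{21} divides d_{21}α + 1, u_2 = −(d_{21}α+1)/l_{21}, u_1 = d_{01}α − u_2, and the integer inequalities α(d_{02} − l_{02}d_{01}) ≥ l_{02} and α(l_{21}d_{11} + l_{11}d_{21} + d_{01}l_{11}l_{21}) ≥ −l_{11} hold (these are the integer forms of the bounds l_{02}/(d_{02}−l_{02}d_{01})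 ≤ α ≤ −l_{11}/(l_{21}d_{11}+l_{11}d_{21}+d_{01}l_{11}l_{21}) of the paper). -/
/-!
Concrete setup for rational `𝕂*`-surfaces of Picard number one: `r = 2`, `s = 1`,
`n₀ = 2`, `n₁ = n₂ = 1`, `m = 0`. The matrix `P` is a `3×4` integer matrix whose four
columns `v₀₁, v₀₂, v₁₁, v₂₁` are indexed by `Fin 4`; column `x` belongs to the block
`blk x` and carries the exponent `L x`.
-/

namespace Surf

/-- block structure `(n₀, n₁, n₂) = (2, 1, 1)`: columns `0, 1` form block `0`,
column `2` is block `1`, column `3` is block `2`. -/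
def blk : Fin 4 → Fin 3 := ![0, 0, 1, 2]

/-- The pairing `⟨u, v_x⟩` of a linear form `u ∈ ℤ³` with the column `v_x` of `P`. -/
def pairc (P : Matrix (Fin 3) (Fin 4) ℤ) (u : Fin 3 → ℤ) (x : Fin 4) : ℤ :=
  ∑ t : Fin 3, u t * P t x

/-- `(u, i₀, i₁, c)` is a *horizontal Demazure `P`-root* (Definition 5.2 (ii)), for the
block structure `(2,1,1)` with exponent data `L` and no `S`-columns (`m = 0`);
`c i` is the distinguished column of block `i`. -/
def IsHorDemRoot (P : Matrix (Fin 3) (Fin 4) ℤ) (L : Fin 4 → ℕ)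
    (u : Fin 3 → ℤ) (i₀ i₁ : Fin 3) (c : Fin 3 → Fin 4) : Prop :=
  i₀ ≠ i₁ ∧
  (∀ i, blk (c i) = i) ∧
  (∀ i, i ≠ i₀ → i ≠ i₁ → L (c i) = 1) ∧
  (∀ i, i ≠ i₀ → i ≠ i₁ → pairc P u (c i) = 0) ∧
  pairc P u (c i₁) = -1 ∧
  (∀ x : Fin 4, blk x ≠ i₀ → blk x ≠ i₁ → x ≠ c (blk x) →
      (L x : ℤ) ≤ pairc P u x) ∧
  (∀ x : Fin 4, (blk x = i₀ ∨ blk x = i₁) → x ≠ c (blk x) → 0 ≤ pairc P u x) ∧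
  0 ≤ pairc P u (c i₀)

/-- `(u, k₀)` is a *vertical Demazure `P`-root* (Definition 5.2 (i)); here `vS` lists
the `S`-columns of `P` (there are `m` of them). -/
def IsVertDemRoot {m : ℕ} (P : Matrix (Fin 3) (Fin 4) ℤ) (vS : Fin m → Fin 3 → ℤ)
    (u : Fin 3 → ℤ) (k₀ : Fin m) : Prop :=
  (∀ x : Fin 4, 0 ≤ pairc P u x) ∧
  (∀ k, k ≠ k₀ → 0 ≤ ∑ t : Fin 3, u t * vS k t) ∧
  (∑ t : Fin 3, u t * vS k₀ t) = -1

end Surf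

namespace Surf

/-- The matrix `P` of Proposition 5.2 of the paper (`prop:demrootsexpl`). -/
def P14 (l02 l11 l21 : ℕ) (d01 d02 d11 d21 : ℤ) : Matrix (Fin 3) (Fin 4) ℤ :=
  !![-1, -(l02 : ℤ), (l11 : ℤ), 0;
     -1, -(l02 : ℤ), 0, (l21 : ℤ);
     d01, d02, d11, d21]

/-- The exponent data `l₀ = (1, l₀₂)`, `l₁ = (l₁₁)`, `l₂ = (l₂₁)`. -/
def L14 (l02 l11 l21 : ℕ) : Fin 4 → ℕ := ![1, l02, l11, l21]

end Surf


private lemma Surf.pairc_vals (l02 l11 l21 : ℕ) (d01 d02 d11 d21 : ℤ) (u : Fin 3 → ℤ) :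
    pairc (P14 l02 l11 l21 d01 d02 d11 d21) u 0 = -u 0 - u 1 + u 2 * d01 ∧
    pairc (P14 l02 l11 l21 d01 d02 d11 d21) u 1 = -(l02 : ℤ) * u 0 - l02 * u 1 + u 2 * d02 ∧
    pairc (P14 l02 l11 l21 d01 d02 d11 d21) u 2 = (l11 : ℤ) * u 0 + u 2 * d11 ∧
    pairc (P14 l02 l11 l21 d01 d02 d11 d21) u 3 = (l21 : ℤ) * u 1 + u 2 * d21 := by
  refine ⟨?_, ?_, ?_, ?_⟩ <;>
  · simp [pairc, P14, Fin.sum_univ_three]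
    ring

open Surf in
/-- Proposition 5.2 (i): description of the horizontal Demazure
`P`-roots of the form `(u, 1, 2, (1,1,1))`. -/
theorem stmt_14 (l02 l11 l21 : ℕ) (d01 d02 d11 d21 : ℤ)
    (h02 : 1 ≤ l02) (h21 : 2 ≤ l21) (h1121 : l21 ≤ l11)
    -- the columns of `P` are pairwise different ...
    (hdiff : Function.Injective
      (fun x : Fin 4 => fun t : Fin 3 => P14 l02 l11 l21 d01 d02 d11 d21 t x))
    -- ... primitive vectors ...
    (hprim : ∀ (x : Fin 4) (c : ℤ) (w : Fin 3 → ℤ),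
        (fun t => P14 l02 l11 l21 d01 d02 d11 d21 t x) = c • w → IsUnit c)
    -- ... generating `ℚ³` as a convex cone ...
    (hcone : ∀ y : Fin 3 → ℚ, ∃ a : Fin 4 → ℚ,
        (∀ x, 0 ≤ a x) ∧
        ∀ t, y t = ∑ x : Fin 4, a x * ((P14 l02 l11 l21 d01 d02 d11 d21 t x : ℤ) : ℚ))
    -- ... and `P` is positive: `det P₀₁ > 0` where `P₀₁` deletes the first column.
    (hpos : 0 < ((P14 l02 l11 l21 d01 d02 d11 d21).submatrix id Fin.succ).det) :
    ∀ u : Fin 3 → ℤ,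
      IsHorDemRoot (P14 l02 l11 l21 d01 d02 d11 d21) (L14 l02 l11 l21) u 1 2 ![0, 2, 3] ↔
      ((l21 : ℤ) ∣ d21 * u 2 + 1 ∧
       u 1 = -((d21 * u 2 + 1) / (l21 : ℤ)) ∧
       u 0 = d01 * u 2 - u 1 ∧
       (l02 : ℤ) ≤ u 2 * (d02 - (l02 : ℤ) * d01) ∧
       -(l11 : ℤ) ≤ u 2 * ((l21 : ℤ) * d11 + (l11 : ℤ) * d21 + d01 * (l11 : ℤ) * (l21 : ℤ))) := by

  intro u
  obtain ⟨e0, e1, e2, e3⟩ := Surf.pairc_vals l02 l11 l21 d01 d02 d11 d21 u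
  have hl21 : (0 : ℤ) < (l21 : ℤ) := by exact_mod_cast lt_of_lt_of_le two_pos h21
  constructor
  · rintro ⟨-, -, -, h4, h5, h6, -, h8⟩
    have hA : -u 0 - u 1 + u 2 * d01 = 0 := by
      have := h4 0 (by decide) (by decide)
      rwa [show (![0, 2, 3] : Fin 3 → Fin 4) 0 = 0 from rfl, e0] at this
    have hB : (l21 : ℤ) * u 1 + u 2 * d21 = -1 := by
      rwa [show (![0, 2, 3] : Fin 3 → Fin 4) 2 = 3 from rfl, e3] at h5
    have hC : (l02 : ℤ) ≤ -(l02 : ℤ) * u 0 - l02 * u 1 + u 2 * d02 := by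
      have := h6 1 (by decide) (by decide) (by decide)
      rwa [show ((L14 l02 l11 l21 1 : ℕ) : ℤ) = (l02 : ℤ) from rfl, e1] at this
    have hD : 0 ≤ (l11 : ℤ) * u 0 + u 2 * d11 := by
      rwa [show (![0, 2, 3] : Fin 3 → Fin 4) 1 = 2 from rfl, e2] at h8
    refine ⟨⟨-u 1, by linarith⟩, ?_, by linear_combination -hA, ?_, ?_⟩
    · have hk : d21 * u 2 + 1 = (l21 : ℤ) * (-u 1) := by linarith
      rw [hk, Int.mul_ediv_cancel_left _ hl21.ne']
      ring
    · have key : u 2 * (d02 - (l02 : ℤ) * d01)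
          = -(l02 : ℤ) * u 0 - l02 * u 1 + u 2 * d02 := by
        linear_combination -(l02 : ℤ) * hA
      rw [key]; exact hC
    · have key2 : (l21 : ℤ) * ((l11 : ℤ) * u 0 + u 2 * d11)
          = u 2 * ((l21 : ℤ) * d11 + (l11 : ℤ) * d21 + d01 * (l11 : ℤ) * (l21 : ℤ)) + l11 := by
        linear_combination -(l11 : ℤ) * (l21 : ℤ) * hA - (l11 : ℤ) * hB
      have := mul_nonneg hl21.le hD
      linarith [key2]
  · rintro ⟨hdvd, hu1, hu0, hC', hD'⟩
    obtain ⟨k, hk⟩ := hdvd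
    have hkd : (d21 * u 2 + 1) / (l21 : ℤ) = k := by
      rw [hk, Int.mul_ediv_cancel_left _ hl21.ne']
    rw [hkd] at hu1
    have hA : -u 0 - u 1 + u 2 * d01 = 0 := by linear_combination -hu0
    have hB : (l21 : ℤ) * u 1 + u 2 * d21 = -1 := by linear_combination (l21 : ℤ) * hu1 + hk
    have hC : (l02 : ℤ) ≤ -(l02 : ℤ) * u 0 - l02 * u 1 + u 2 * d02 := by
      have key : u 2 * (d02 - (l02 : ℤ) * d01)
          = -(l02 : ℤ) * u 0 - l02 * u 1 + u 2 * d02 := by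
        linear_combination -(l02 : ℤ) * hA
      linarith [key]
    have hD : 0 ≤ (l11 : ℤ) * u 0 + u 2 * d11 := by
      have key2 : (l21 : ℤ) * ((l11 : ℤ) * u 0 + u 2 * d11)
          = u 2 * ((l21 : ℤ) * d11 + (l11 : ℤ) * d21 + d01 * (l11 : ℤ) * (l21 : ℤ)) + l11 := by
        linear_combination -(l11 : ℤ) * (l21 : ℤ) * hA - (l11 : ℤ) * hB
      nlinarith [key2, hD', hl21]
    refine ⟨by decide, by decide, ?_, ?_, ?_, ?_, ?_, ?_⟩
    · intro i h1 h2
      fin_cases i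
      · rfl
      · exact absurd rfl h1
      · exact absurd rfl h2
    · intro i h1 h2
      fin_cases i
      · show pairc (P14 l02 l11 l21 d01 d02 d11 d21) u 0 = 0
        rw [e0]; exact hA
      · exact absurd rfl h1
      · exact absurd rfl h2
    · rw [show (![0, 2, 3] : Fin 3 → Fin 4) 2 = 3 from rfl, e3]; exact hB
    · intro x hx1 hx2 hx3
      fin_cases x
      · exact absurd rfl hx3
      · show (l02 : ℤ) ≤ pairc (P14 l02 l11 l21 d01 d02 d11 d21) u 1
        rw [e1]; exact hC
      · exact absurd rfl hx1
      · exact absurd rfl hx2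
    · intro x hx hx3
      fin_cases x
      · rcases hx with h | h <;> exact absurd h (by decide)
      · rcases hx with h | h <;> exact absurd h (by decide)
      · exact absurd rfl hx3
      · exact absurd rfl hx3
    · rw [show (![0, 2, 3] : Fin 3 → Fin 4) 1 = 2 from rfl, e2]; exact hD
end

section
/- Let l_0, l_1, l_2 be integers with l_0 ≥ 1, l_1 ≥ l_2 ≥ 2, l_0 < l_1l_2 and gcd(l_1,l_2) = 1, and let (d_1,d_2) be the unique pair of integers with d_1l_2 + d_2l_1 = −1 and 0 ≤ d_2 < l_2. Let P be the 3×4 integer matrix with rows (−1, −l_0, l_1, 0), (−1, −l_0, 0, l_2), (0, 1, d_1, d_2); here r = 2, s = 1, n_0 = 2, n_1 = n_2 = 1, m = 0, with exponent data l_0-block (1, l_0), l_1-block (l_1), l_2-block (l_2). Then there exists a horizontal Demazure P-root (u, i_0, i_1, C) if and only if l_0 ≤ l_1. -/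
namespace Surf

/-- The matrix `P` of the `𝕂*`-surface `X(l₀,l₁,l₂)` with exactly one singularity
(Construction 5.4 of the paper). -/
def P15 (l0 l1 l2 : ℕ) (d1 d2 : ℤ) : Matrix (Fin 3) (Fin 4) ℤ :=
  !![-1, -(l0 : ℤ), (l1 : ℤ), 0;
     -1, -(l0 : ℤ), 0, (l2 : ℤ);
     0, 1, d1, d2]

/-- The exponent data `l₀-block (1, l₀)`, `l₁-block (l₁)`, `l₂-block (l₂)`. -/
def L15 (l0 l1 l2 : ℕ) : Fin 4 → ℕ := ![1, l0, l1, l2]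

end Surf

namespace Surf

lemma paircP15_zero (l0 l1 l2 : ℕ) (d1 d2 : ℤ) (u : Fin 3 → ℤ) :
    pairc (P15 l0 l1 l2 d1 d2) u 0 = -u 0 - u 1 := by
  simp [pairc, P15, Fin.sum_univ_three]; ring

lemma paircP15_one (l0 l1 l2 : ℕ) (d1 d2 : ℤ) (u : Fin 3 → ℤ) :
    pairc (P15 l0 l1 l2 d1 d2) u 1 = -(l0:ℤ) * u 0 - l0 * u 1 + u 2 := by
  simp [pairc, P15, Fin.sum_univ_three]; ring

lemma paircP15_two (l0 l1 l2 : ℕ) (d1 d2 : ℤ) (u : Fin 3 → ℤ) :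
    pairc (P15 l0 l1 l2 d1 d2) u 2 = (l1:ℤ) * u 0 + d1 * u 2 := by
  simp [pairc, P15, Fin.sum_univ_three]; ring

lemma paircP15_three (l0 l1 l2 : ℕ) (d1 d2 : ℤ) (u : Fin 3 → ℤ) :
    pairc (P15 l0 l1 l2 d1 d2) u 3 = (l2:ℤ) * u 1 + d2 * u 2 := by
  simp [pairc, P15, Fin.sum_univ_three]; ring

end Surf

open Surf in
/-- Proposition 5.5 (iv): the surface `X(l₀,l₁,l₂)` admits a
horizontal Demazure `P`-root if and only if `l₀ ≤ l₁`. -/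
theorem stmt_15 (l0 l1 l2 : ℕ) (d1 d2 : ℤ)
    (h0 : 1 ≤ l0) (h2 : 2 ≤ l2) (h12 : l2 ≤ l1) (hlt : l0 < l1 * l2)
    (hgcd : Nat.gcd l1 l2 = 1)
    (hd : d1 * (l2 : ℤ) + d2 * (l1 : ℤ) = -1) (hd2 : 0 ≤ d2) (hd2' : d2 < (l2 : ℤ)) :
    (∃ (u : Fin 3 → ℤ) (i₀ i₁ : Fin 3) (c : Fin 3 → Fin 4),
        IsHorDemRoot (P15 l0 l1 l2 d1 d2) (L15 l0 l1 l2) u i₀ i₁ c) ↔ l0 ≤ l1 := by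
  constructor
  · rintro ⟨u, i₀, i₁, c, hne, hblk, hLone, hzero, hm1, hbig, hnn, hc0nn⟩
    have hc1 : c 1 = 2 := (by decide : ∀ x : Fin 4, blk x = 1 → x = 2) _ (hblk 1)
    have hc2 : c 2 = 3 := (by decide : ∀ x : Fin 4, blk x = 2 → x = 3) _ (hblk 2)
    have hc0or : c 0 = 0 ∨ c 0 = 1 :=
      (by decide : ∀ x : Fin 4, blk x = 0 → x = 0 ∨ x = 1) _ (hblk 0)
    fin_cases i₀ <;> fin_cases i₁
    · exact absurd rfl hne
    · have := hLone 2 (by decide) (by decide); rw [hc2] at this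
      simp [L15] at this; omega
    · have := hLone 1 (by decide) (by decide); rw [hc1] at this
      simp [L15] at this; omega
    · have := hLone 2 (by decide) (by decide); rw [hc2] at this
      simp [L15] at this; omega
    · exact absurd rfl hne
    · -- main case i₀ = 1, i₁ = 2
      by_cases hl : l0 = 1
      · omega
      have hL0 := hLone 0 (by decide) (by decide)
      have hc0 : c 0 = 0 := by
        rcases hc0or with h | h
        · exact h
        · rw [h] at hL0; simp [L15] at hL0; omega
      have hz : pairc (P15 l0 l1 l2 d1 d2) u (c 0) = 0 := hzero 0 (by decide) (by decide)
      rw [hc0, paircP15_zero] at hz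
      have hb : (L15 l0 l1 l2 1 : ℤ) ≤ pairc (P15 l0 l1 l2 d1 d2) u 1 :=
        hbig 1 (by decide) (by decide)
          (by rw [show blk (1:Fin 4) = 0 from rfl, hc0]; decide)
      rw [paircP15_one] at hb
      simp only [L15, Matrix.cons_val_one, Matrix.head_cons, Matrix.cons_val_zero] at hb
      have hm : pairc (P15 l0 l1 l2 d1 d2) u 3 = -1 := by rw [← hc2]; exact hm1
      rw [paircP15_three] at hm
      have hp : 0 ≤ pairc (P15 l0 l1 l2 d1 d2) u 2 := by rw [← hc1]; exact hc0nn
      rw [paircP15_two] at hp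
      have hu1 : u 1 = -u 0 := by linarith
      rw [hu1] at hb
      have hw : (l0:ℤ) ≤ u 2 := by linarith
      have hkey : u 2 ≤ (l1:ℤ) := by
        have e1 : ((l2:ℤ) * u 1 + d2 * u 2) * l1 = -l1 := by rw [hm]; ring
        have e2 : u 2 * (d1 * (l2:ℤ) + d2 * l1) = -u 2 := by rw [hd]; ring
        have e3 : 0 ≤ ((l1:ℤ) * u 0 + d1 * u 2) * l2 := mul_nonneg hp (by positivity)
        have e4 : (-u 0 - u 1) * ((l1:ℤ) * l2) = 0 := by rw [hz]; ring
        nlinarith [e1, e2, e3, e4]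
      have : (l0:ℤ) ≤ (l1:ℤ) := le_trans hw hkey
      exact_mod_cast this
    · have := hLone 1 (by decide) (by decide); rw [hc1] at this
      simp [L15] at this; omega
    · -- main case i₀ = 2, i₁ = 1
      by_cases hl : l0 = 1
      · omega
      have hL0 := hLone 0 (by decide) (by decide)
      have hc0 : c 0 = 0 := by
        rcases hc0or with h | h
        · exact h
        · rw [h] at hL0; simp [L15] at hL0; omega
      have hz : pairc (P15 l0 l1 l2 d1 d2) u (c 0) = 0 := hzero 0 (by decide) (by decide)
      rw [hc0, paircP15_zero] at hz
      have hb : (L15 l0 l1 l2 1 : ℤ) ≤ pairc (P15 l0 l1 l2 d1 d2) u 1 :=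
        hbig 1 (by decide) (by decide)
          (by rw [show blk (1:Fin 4) = 0 from rfl, hc0]; decide)
      rw [paircP15_one] at hb
      simp only [L15, Matrix.cons_val_one, Matrix.head_cons, Matrix.cons_val_zero] at hb
      have hm : pairc (P15 l0 l1 l2 d1 d2) u 2 = -1 := by rw [← hc1]; exact hm1
      rw [paircP15_two] at hm
      have hp : 0 ≤ pairc (P15 l0 l1 l2 d1 d2) u 3 := by rw [← hc2]; exact hc0nn
      rw [paircP15_three] at hp
      have hu1 : u 1 = -u 0 := by linarith
      rw [hu1] at hb
      have hw : (l0:ℤ) ≤ u 2 := by linarith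
      have hkey : u 2 ≤ (l2:ℤ) := by
        have e1 : ((l1:ℤ) * u 0 + d1 * u 2) * l2 = -l2 := by rw [hm]; ring
        have e2 : u 2 * (d1 * (l2:ℤ) + d2 * l1) = -u 2 := by rw [hd]; ring
        have e3 : 0 ≤ ((l2:ℤ) * u 1 + d2 * u 2) * l1 := mul_nonneg hp (by positivity)
        have e4 : (-u 0 - u 1) * ((l1:ℤ) * l2) = 0 := by rw [hz]; ring
        nlinarith [e1, e2, e3, e4]
      have h1 : (l0:ℤ) ≤ (l2:ℤ) := le_trans hw hkey
      have h2 : l0 ≤ l2 := by exact_mod_cast h1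
      omega
    · exact absurd rfl hne
  · intro hle
    refine ⟨![-d1, d1, (l1:ℤ)], 1, 2, ![0, 2, 3], (by decide), (by decide), ?_, ?_, ?_, ?_, ?_, ?_⟩
    · intro i hi0 hi1
      fin_cases i
      · simp [L15]
      · exact absurd rfl hi0
      · exact absurd rfl hi1
    · intro i hi0 hi1
      fin_cases i
      · simp [pairc, P15, Fin.sum_univ_three]
      · exact absurd rfl hi0
      · exact absurd rfl hi1
    · show pairc _ _ 3 = -1
      simp [pairc, P15, Fin.sum_univ_three]
      linarith [hd]
    · intro x hx0 hx1 hxc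
      fin_cases x
      · simp [blk] at hxc
      · show (L15 l0 l1 l2 1 : ℤ) ≤ pairc _ _ 1
        simp [pairc, P15, L15, Fin.sum_univ_three]
        nlinarith [hle]
      · simp [blk] at hx0
      · simp [blk] at hx1
    · intro x hx hxc
      fin_cases x <;> simp_all [blk]
    · show (0:ℤ) ≤ pairc _ _ 2
      simp [pairc, P15, Fin.sum_univ_three, mul_comm]
end

section
/- Let l_0, l_1, l_2 be integers with l_0 ≥ 1, l_1 ≥ l_2 ≥ 2, l_0 < l_1l_2, gcd(l_1,l_2) = 1, and l_0l_1l_2 < l_0l_1 + l_0l_2 + l_1l_2 (the log terminality condition for the 𝕂*-surface X(l_0,l_1,l_2)). Then exactly one of the following holds: l_0 = 1; or l_0 = 2 and l_2 = 2; or (l_0,l_1,l_2) is one of (3,3,2), (2,4,3), (2,5,3), (3,5,2), (4,3,2), (5,3,2). In the last two cases (4,3,2) and (5,3,2) one has l_0 > l_1, so the surface is not almost homogeneous (its singularity is of type E_7 resp. E_8), and in all other cases l_0 ≤ l_1. -/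
/-- the arithmetic classification underlying Corollary 5.6: the
platonic-triple analysis of the log terminal `𝕂*`-surfaces `X(l₀,l₁,l₂)` with one
singularity: exactly one of (1) `l₀ = 1`, (2) `l₀ = 2 ∧ l₂ = 2`,
(3) `(l₀,l₁,l₂) ∈ {(3,3,2),(2,4,3),(2,5,3),(3,5,2),(4,3,2),(5,3,2)}` holds; in the last
two triples of (3) one has `l₀ > l₁` (the surface is not almost homogeneous, with
singularity `E₇` resp. `E₈`), and in all other cases `l₀ ≤ l₁`. -/
theorem stmt_16 (l0 l1 l2 : ℤ)
    (h0 : 1 ≤ l0) (h2 : 2 ≤ l2) (h12 : l2 ≤ l1) (hlt : l0 < l1 * l2)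
    (hgcd : Int.gcd l1 l2 = 1)
    -- log terminality
    (hlog : l0 * l1 * l2 < l0 * l1 + l0 * l2 + l1 * l2) :
    (((l0 = 1) ∧ ¬(l0 = 2 ∧ l2 = 2) ∧
        ¬((l0, l1, l2) = (3, 3, 2) ∨ (l0, l1, l2) = (2, 4, 3) ∨
          (l0, l1, l2) = (2, 5, 3) ∨ (l0, l1, l2) = (3, 5, 2) ∨
          (l0, l1, l2) = (4, 3, 2) ∨ (l0, l1, l2) = (5, 3, 2))) ∨
     (¬(l0 = 1) ∧ (l0 = 2 ∧ l2 = 2) ∧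
        ¬((l0, l1, l2) = (3, 3, 2) ∨ (l0, l1, l2) = (2, 4, 3) ∨
          (l0, l1, l2) = (2, 5, 3) ∨ (l0, l1, l2) = (3, 5, 2) ∨
          (l0, l1, l2) = (4, 3, 2) ∨ (l0, l1, l2) = (5, 3, 2))) ∨
     (¬(l0 = 1) ∧ ¬(l0 = 2 ∧ l2 = 2) ∧
        ((l0, l1, l2) = (3, 3, 2) ∨ (l0, l1, l2) = (2, 4, 3) ∨
         (l0, l1, l2) = (2, 5, 3) ∨ (l0, l1, l2) = (3, 5, 2) ∨
         (l0, l1, l2) = (4, 3, 2) ∨ (l0, l1, l2) = (5, 3, 2)))) ∧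
    (((l0, l1, l2) = (4, 3, 2) ∨ (l0, l1, l2) = (5, 3, 2)) → l1 < l0) ∧
    ((¬((l0, l1, l2) = (4, 3, 2) ∨ (l0, l1, l2) = (5, 3, 2))) → l0 ≤ l1) := by

  simp only [Prod.mk.injEq]
  rcases eq_or_lt_of_le h0 with h1 | h1
  · -- l0 = 1
    refine ⟨Or.inl ⟨h1.symm, by omega, by omega⟩, by omega, by omega⟩
  -- l0 ≥ 2
  have hne : l1 ≠ l2 := by
    rintro rfl
    rw [Int.gcd_self] at hgcd
    omega
  have hl12 : l2 < l1 := lt_of_le_of_ne h12 (Ne.symm hne)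
  have hl2 : l2 ≤ 3 := by nlinarith [mul_nonneg (sub_nonneg.2 (show (2:ℤ) ≤ l1 by omega)) (sub_nonneg.2 h2)]
  by_cases hc2 : l0 = 2 ∧ l2 = 2
  · refine ⟨Or.inr (Or.inl ⟨by omega, hc2, by omega⟩), by omega, by omega⟩
  · -- remaining finite cases
    have hb0 : l0 ≤ 5 := by
      rcases (by omega : l2 = 2 ∨ l2 = 3) with rfl | rfl
      · have h3 : 3 ≤ l0 := by omega
        nlinarith
      · nlinarith
    have hb1 : l1 ≤ 5 := by
      rcases (by omega : l2 = 2 ∨ l2 = 3) with rfl | rfl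
      · have h3 : 3 ≤ l0 := by omega
        nlinarith
      · nlinarith
    interval_cases l0 <;> interval_cases l2 <;> interval_cases l1 <;>
      first
        | (exact absurd hgcd (by decide))
        | (refine ⟨Or.inr (Or.inr ⟨by omega, by omega, by omega⟩), by omega, by omega⟩)
end

section
/- Let l_0, l_1, l_2 and a be integers with l_0 ≥ 1, l_1 ≥ l_2 ≥ 2, l_0 < l_1l_2, gcd(l_1,l_2) = 1, l_0l_1l_2 < l_0l_1 + l_0l_2 + l_1l_2 (log terminality), l_0 ≤ l_1 (almost homogeneity), a ≥ 1, and suppose l_1l_2 − l_0 divides a·(l_1 + l_2 + 1 − l_0) (the Gorenstein index condition). Then one of the following holds: (i) l_0 = 1 and l_2 ≤ l_1 ≤ 2a² + (4/3)a (as rational numbers, i.e. 3l_1 ≤ 6a² + 4a); (ii) l_0 = 2, l_2 = 2 and l_1 ≤ 3a + 2; (iii) (l_0,l_1,l_2) is one of (3,3,2), (2,4,3), (2,5,3), (3,5,2). -/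
set_option maxHeartbeats 800000 in
/-- the quantitative part of Corollary 5.6: for a log terminal almost
homogeneous `𝕂*`-surface `X(l₀,l₁,l₂)` of Picard number one with one singularity and
Gorenstein index dividing `a` (i.e. `l₁l₂ - l₀ ∣ a(l₁+l₂+1-l₀)`), one of the following
holds: (i) `l₀ = 1` and `l₂ ≤ l₁ ≤ 2a² + 4a/3` (i.e. `3l₁ ≤ 6a² + 4a`);
(ii) `l₀ = 2`, `l₂ = 2` and `l₁ ≤ 3a + 2`;
(iii) `(l₀,l₁,l₂) ∈ {(3,3,2),(2,4,3),(2,5,3),(3,5,2)}`. -/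
theorem stmt_17 (l0 l1 l2 a : ℤ)
    (h0 : 1 ≤ l0) (h2 : 2 ≤ l2) (h12 : l2 ≤ l1) (hlt : l0 < l1 * l2)
    (hgcd : Int.gcd l1 l2 = 1)
    -- log terminality
    (hlog : l0 * l1 * l2 < l0 * l1 + l0 * l2 + l1 * l2)
    -- almost homogeneity
    (hhom : l0 ≤ l1)
    (ha : 1 ≤ a)
    -- the Gorenstein index condition
    (hgor : (l1 * l2 - l0) ∣ a * (l1 + l2 + 1 - l0)) :
    (l0 = 1 ∧ l2 ≤ l1 ∧ 3 * l1 ≤ 6 * a ^ 2 + 4 * a) ∨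
    (l0 = 2 ∧ l2 = 2 ∧ l1 ≤ 3 * a + 2) ∨
    ((l0, l1, l2) = (3, 3, 2) ∨ (l0, l1, l2) = (2, 4, 3) ∨
     (l0, l1, l2) = (2, 5, 3) ∨ (l0, l1, l2) = (3, 5, 2)) := by
  have hl1 : 2 ≤ l1 := le_trans h2 h12
  rcases eq_or_lt_of_le h0 with h01 | h0'
  · -- l0 = 1
    left
    subst h01
    obtain ⟨k, hk⟩ := hgor
    have hN : 0 < l1 * l2 - 1 := by nlinarith
    have hk1 : 1 ≤ k := by
      by_contra hcon
      push_neg at hcon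
      have h1 : (l1 * l2 - 1) * k ≤ 0 :=
        mul_nonpos_of_nonneg_of_nonpos hN.le (by linarith)
      nlinarith
    -- l2 ≤ 2a
    have hNk : l1 * l2 - 1 ≤ a * (l1 + l2) := by
      nlinarith [mul_nonneg (by linarith : (0:ℤ) ≤ l1 * l2 - 1) (by linarith : (0:ℤ) ≤ k - 1)]
    have hl2a : l2 ≤ 2 * a := by
      by_contra hcon
      push_neg at hcon
      nlinarith [mul_nonneg (by linarith : (0:ℤ) ≤ l1 - 2) (by linarith : (0:ℤ) ≤ l2 - 2*a - 1)]
    -- 3k ≤ 4a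
    have h3k : 3 * k ≤ 4 * a := by
      by_contra hcon
      push_neg at hcon
      nlinarith [mul_nonneg (by linarith : (0:ℤ) ≤ k) (by nlinarith : (0:ℤ) ≤ l1 * l2 - 4),
        mul_nonneg (by linarith : (0:ℤ) ≤ a) (by nlinarith : (0:ℤ) ≤ l1 * l2 - l1 - l2),
        mul_nonneg (by nlinarith : (0:ℤ) ≤ 3*k - 4*a - 1) (by nlinarith : (0:ℤ) ≤ l1 * l2)]
    -- k*l2 - a ≥ 1
    have hkey : l1 * (k * l2 - a) = a * l2 + k := by linear_combination -hk
    have hd : 1 ≤ k * l2 - a := by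
      by_contra hcon
      push_neg at hcon
      have h1 : l1 * (k * l2 - a) ≤ 0 :=
        mul_nonpos_of_nonneg_of_nonpos (by linarith) (by linarith)
      nlinarith
    have hl1b : l1 ≤ a * l2 + k := by
      nlinarith [mul_nonneg (by linarith : (0:ℤ) ≤ l1) (by linarith : (0:ℤ) ≤ k * l2 - a - 1)]
    refine ⟨rfl, h12, ?_⟩
    nlinarith [mul_nonneg (by linarith : (0:ℤ) ≤ a) (by linarith : (0:ℤ) ≤ 2*a - l2)]
  · -- l0 ≥ 2
    right
    have h02 : 2 ≤ l0 := h0'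
    have hl03 : l0 ≤ 3 := by
      by_contra hcon
      push_neg at hcon
      have h4 : 4 ≤ l0 := hcon
      have h41 : 4 ≤ l1 := le_trans h4 hhom
      nlinarith [mul_nonneg (by linarith : (0:ℤ) ≤ l2 - 2)
          (by nlinarith : (0:ℤ) ≤ l0 * l1 - l0 - l1),
        mul_nonneg (by linarith : (0:ℤ) ≤ l0 - 4) (by linarith : (0:ℤ) ≤ l1 - 2),
        mul_nonneg (by linarith : (0:ℤ) ≤ l0 - 2) (by linarith : (0:ℤ) ≤ l1 - 4)]
    interval_cases l0
    · -- l0 = 2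
      have hl23 : l2 ≤ 3 := by
        by_contra hcon
        push_neg at hcon
        nlinarith [mul_nonneg (by linarith : (0:ℤ) ≤ l1 - 4) (by linarith : (0:ℤ) ≤ l2 - 2),
          mul_nonneg (by linarith : (0:ℤ) ≤ l1 - 2) (by linarith : (0:ℤ) ≤ l2 - 4)]
      interval_cases l2
      · -- l2 = 2
        left
        obtain ⟨k, hk⟩ := hgor
        have hkey : (2 * k - a) * (l1 - 1) = 2 * a := by linear_combination -hk
        have hd : 1 ≤ 2 * k - a := by
          by_contra hcon
          push_neg at hcon
          have h1 : (2 * k - a) * (l1 - 1) ≤ 0 :=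
            mul_nonpos_of_nonpos_of_nonneg (by linarith) (by linarith)
          linarith
        refine ⟨rfl, rfl, ?_⟩
        linarith [mul_nonneg (by linarith : (0:ℤ) ≤ 2*k - a - 1) (by linarith : (0:ℤ) ≤ l1 - 1), hkey]
      · -- l2 = 3
        right
        have hub : l1 ≤ 5 := by linarith
        interval_cases l1
        · exact absurd hgcd (by decide)
        · right; left; rfl
        · right; right; left; rfl
    · -- l0 = 3
      have hl22 : l2 = 2 := by
        by_contra hcon
        have h3 : 3 ≤ l2 := by omega
        have h31 : 3 ≤ l1 := le_trans h3 h12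
        nlinarith [mul_nonneg (by linarith : (0:ℤ) ≤ l1 - 3) (by linarith : (0:ℤ) ≤ l2 - 3),
          mul_nonneg (by linarith : (0:ℤ) ≤ l1 - 3) (by linarith : (0:ℤ) ≤ l2 - 2)]
      subst hl22
      right
      have hlb : 3 ≤ l1 := hhom
      have hub : l1 ≤ 5 := by linarith
      interval_cases l1
      · left; rfl
      · exact absurd hgcd (by decide)
      · right; right; right; rfl
end

section
/- Let P be the 3×4 integer matrix with rows (−1,−3,3,0), (−1,−3,0,2), (−1,−2,1,1); here r = 2, s = 1, n_0 = 2, n_1 = n_2 = 1, m = 0, with exponent data l_0 = (1,3), l_1 = (3), l_2 = (2). Then there are no vertical Demazure P-roots (since m = 0), and there is exactly one horizontal Demazure P-root, namely (u, i_0, i_1, C) with u = (−1,−2,3), i_0 = 1, i_1 = 2, C = (1,1,1); i.e., a tuple (u, i_0, i_1, C) satisfies the defining conditions of a horizontal Demazure P-root if and only if it equals this tuple. -/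
namespace Surf

/-- The matrix `P` of the `E₆`-singular cubic surface (the paper's running example). -/
def P18 : Matrix (Fin 3) (Fin 4) ℤ :=
  !![-1, -3, 3, 0;
     -1, -3, 0, 2;
     -1, -2, 1, 1]

/-- The exponent data `l₀ = (1, 3)`, `l₁ = (3)`, `l₂ = (2)`. -/
def L18 : Fin 4 → ℕ := ![1, 3, 3, 2]

end Surf


namespace Surf
lemma pc0 (u : Fin 3 → ℤ) : pairc P18 u 0 = -u 0 - u 1 - u 2 := by
  simp [pairc, P18, Fin.sum_univ_three]; ring
lemma pc1 (u : Fin 3 → ℤ) : pairc P18 u 1 = -3 * u 0 - 3 * u 1 - 2 * u 2 := by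
  simp [pairc, P18, Fin.sum_univ_three]; ring
lemma pc2 (u : Fin 3 → ℤ) : pairc P18 u 2 = 3 * u 0 + u 2 := by
  simp [pairc, P18, Fin.sum_univ_three]; ring
lemma pc3 (u : Fin 3 → ℤ) : pairc P18 u 3 = 2 * u 1 + u 2 := by
  simp [pairc, P18, Fin.sum_univ_three]; ring
end Surf

open Surf in
/-- Example 5.3, the `E₆`-singular cubic: there are no vertical
Demazure `P`-roots (as `m = 0`), and the only horizontal Demazure `P`-root is
`(u, i₀, i₁, C) = ((-1,-2,3), 1, 2, (1,1,1))`. -/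
theorem stmt_18 :
    -- no vertical Demazure `P`-roots, since `m = 0`
    (¬ ∃ (u : Fin 3 → ℤ) (k₀ : Fin 0),
        IsVertDemRoot P18 (fun k _ => k.elim0) u k₀) ∧
    -- exactly one horizontal Demazure `P`-root
    (∀ (u : Fin 3 → ℤ) (i₀ i₁ : Fin 3) (c : Fin 3 → Fin 4),
        IsHorDemRoot P18 L18 u i₀ i₁ c ↔
          (u = ![-1, -2, 3] ∧ i₀ = 1 ∧ i₁ = 2 ∧ c = ![0, 2, 3])) := by
  have fin3 : ∀ i : Fin 3, i = 0 ∨ i = 1 ∨ i = 2 := by decide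
  have fin4 : ∀ x : Fin 4, x = 0 ∨ x = 1 ∨ x = 2 ∨ x = 3 := by decide
  constructor
  · rintro ⟨u, k₀, -⟩; exact k₀.elim0
  · intro u i₀ i₁ c
    constructor
    · rintro ⟨hne, hblk, hL, hz, h1, hge, hge0, h0⟩
      have key1 : ∀ x : Fin 4, blk x = 1 → x = 2 := by decide
      have key2 : ∀ x : Fin 4, blk x = 2 → x = 3 := by decide
      have key0 : ∀ x : Fin 4, blk x = 0 → x = 0 ∨ x = 1 := by decide
      have hc1 : c 1 = 2 := key1 _ (hblk 1)
      have hc2 : c 2 = 3 := key2 _ (hblk 2)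
      have hb1 : blk 1 = 0 := by decide
      rcases fin3 i₀ with rfl | rfl | rfl <;> rcases fin3 i₁ with rfl | rfl | rfl
      · exact absurd rfl hne
      · have := hL 2 (by decide) (by decide)
        rw [hc2] at this; exact absurd this (by decide)
      · have := hL 1 (by decide) (by decide)
        rw [hc1] at this; exact absurd this (by decide)
      · have := hL 2 (by decide) (by decide)
        rw [hc2] at this; exact absurd this (by decide)
      · exact absurd rfl hne
      · -- main case i₀ = 1, i₁ = 2
        have hc0 : c 0 = 0 := by
          have hl := hL 0 (by decide) (by decide)
          rcases key0 _ (hblk 0) with h | h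
          · exact h
          · rw [h] at hl; exact absurd hl (by decide)
        have e0 := hz 0 (by decide) (by decide)
        rw [hc0, pc0] at e0
        have e3 := h1
        rw [hc2, pc3] at e3
        have e1 := hge 1 (by decide) (by decide) (by rw [hb1, hc0]; decide)
        rw [pc1] at e1
        have e2 := h0
        rw [hc1, pc2] at e2
        simp only [L18] at e1
        norm_num at e1
        refine ⟨?_, rfl, rfl, ?_⟩
        · funext x
          rcases fin3 x with rfl | rfl | rfl <;> simp <;> omega
        · funext i
          rcases fin3 i with rfl | rfl | rfl <;> simp [hc0, hc1, hc2]
      · have := hL 1 (by decide) (by decide)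
        rw [hc1] at this; exact absurd this (by decide)
      · -- case i₀ = 2, i₁ = 1 : contradiction
        exfalso
        have hc0 : c 0 = 0 := by
          have hl := hL 0 (by decide) (by decide)
          rcases key0 _ (hblk 0) with h | h
          · exact h
          · rw [h] at hl; exact absurd hl (by decide)
        have e0 := hz 0 (by decide) (by decide)
        rw [hc0, pc0] at e0
        have e2 := h1
        rw [hc1, pc2] at e2
        have e1 := hge 1 (by decide) (by decide) (by rw [hb1, hc0]; decide)
        rw [pc1] at e1
        have e3 := h0
        rw [hc2, pc3] at e3
        simp only [L18] at e1
        norm_num at e1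
        omega
      · exact absurd rfl hne
    · rintro ⟨rfl, rfl, rfl, rfl⟩
      refine ⟨by decide, by decide, by decide, ?_, ?_, ?_, ?_, ?_⟩
      · intro i hi0 hi1
        rcases fin3 i with rfl | rfl | rfl
        · rw [show (![0,2,3] : Fin 3 → Fin 4) 0 = 0 from rfl, pc0]; norm_num; decide
        · exact absurd rfl hi0
        · exact absurd rfl hi1
      · rw [show (![0,2,3] : Fin 3 → Fin 4) 2 = 3 from rfl, pc3]; norm_num; decide
      · intro x hx0 hx1 hxc
        rcases fin4 x with rfl | rfl | rfl | rfl
        · exact absurd (by decide) hxc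
        · rw [pc1]; simp [L18]
        · exact absurd (by decide) hx0
        · exact absurd (by decide) hx1
      · intro x hx hxc
        rcases fin4 x with rfl | rfl | rfl | rfl
        · rcases hx with h | h <;> exact absurd h (by decide)
        · rcases hx with h | h <;> exact absurd h (by decide)
        · exact absurd (by decide) hxc
        · exact absurd (by decide) hxc
      · rw [show (![0,2,3] : Fin 3 → Fin 4) 1 = 2 from rfl, pc2]; norm_num; decide
end
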